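/- arXiv:1309.1952 — 4 statements merged into one kernel-verified Lean document; each statement's English description precedes it below -/
import Mathlib

section
/- Let y_k = A x_k and y_l = A x_l where A has unit-norm columns with pairwise incoherence |⟨a_i,a_j⟩| < μ₀/√d, and x_k, x_l are s-sparse with nonzero entries having absolute values in [m, M]. If the supports of x_k and x_l intersect in exactly one index i*, then |⟨y_k, y_l⟩| ≥ m² - s²M²μ₀/√d. -/
/-!
Expanding both vectors, `⟨A x_k, A x_l⟩ = x_kᵀ (AᵀA) x_l` is a sum over the pairs `(p, q)` of
`supp x_k × supp x_l`. The pair `(i*, i*)` sees the Gram diagonal `‖a_{i*}‖² = 1` and contributes at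
least `m²` in absolute value. Because the supports meet only in `i*`, every other pair has `p ≠ q`,
so it contributes at most `M² μ₀/√d`, and there are fewer than `s²` such pairs. The reverse triangle
inequality then gives the bound.
-/

open Finset Matrix

variable {ι n R : Type*} [Fintype ι] [Fintype n]

theorem Matrix.mulVec_dotProduct_mulVec [CommSemiring R] (A : Matrix n ι R) (x y : ι → R) :
    A *ᵥ x ⬝ᵥ A *ᵥ y = x ⬝ᵥ (Aᵀ * A) *ᵥ y := by
  rw [dotProduct_mulVec, ← vecMul_transpose, vecMul_vecMul, dotProduct_mulVec]

theorem Matrix.dotProduct_mulVec_eq_sum_support [CommSemiring R] [DecidableEq R]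
    (G : Matrix ι ι R) (x y : ι → R) :
    x ⬝ᵥ G *ᵥ y = ∑ z ∈ ({j | x j ≠ 0} : Finset ι) ×ˢ ({j | y j ≠ 0} : Finset ι),
      x z.1 * G z.1 z.2 * y z.2 := by
  rw [sum_product]
  simp only [dotProduct, mulVec, mul_sum, mul_assoc]
  rw [sum_filter_of_ne fun p _ h => left_ne_zero_of_mul (by simpa [← mul_sum] using h)]
  refine sum_congr rfl fun p _ => (sum_filter_of_ne fun q _ h => ?_).symm
  exact right_ne_zero_of_mul (right_ne_zero_of_mul h)

theorem Finset.ne_of_mem_erase_product {α : Type*} [DecidableEq α] {s t : Finset α} {i : α}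
    (hst : s ∩ t = {i}) {z : α × α} (hz : z ∈ (s ×ˢ t).erase (i, i)) : z.1 ≠ z.2 := by
  obtain ⟨hne, hmem⟩ := mem_erase.1 hz
  rintro heq
  have : z.1 ∈ s ∩ t := mem_inter.2 ⟨(mem_product.1 hmem).1, heq ▸ (mem_product.1 hmem).2⟩
  rw [hst, mem_singleton] at this
  exact hne (Prod.ext this (heq ▸ this))

theorem Matrix.sub_le_abs_dotProduct_mulVec_of_support_inter_eq_singleton
    [CommRing R] [LinearOrder R] [IsStrictOrderedRing R] [DecidableEq ι]
    {G : Matrix ι ι R} {x y : ι → R} {i : ι} {m M ε : R}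
    (hint : ({j | x j ≠ 0} : Finset ι) ∩ ({j | y j ≠ 0} : Finset ι) = {i})
    (hGii : G i i = 1) (hG : ∀ p q, p ≠ q → |G p q| ≤ ε) (hε : 0 ≤ ε)
    (hm : 0 ≤ m) (hxi : m ≤ |x i|) (hyi : m ≤ |y i|)
    (hxM : ∀ j, x j ≠ 0 → |x j| ≤ M) (hyM : ∀ j, y j ≠ 0 → |y j| ≤ M) :
    m ^ 2 - #{j | x j ≠ 0} * #{j | y j ≠ 0} * M ^ 2 * ε ≤ |x ⬝ᵥ G *ᵥ y| := by
  set S : Finset ι := {j | x j ≠ 0}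
  set T : Finset ι := {j | y j ≠ 0}
  set f : ι × ι → R := fun z => x z.1 * G z.1 z.2 * y z.2
  have hii : (i, i) ∈ S ×ˢ T := mem_product.2 (mem_inter.1 (hint.ge (mem_singleton_self i)))
  have hdiag : m ^ 2 ≤ |f (i, i)| := by
    rw [abs_mul, abs_mul, hGii, abs_one, mul_one, sq]
    exact mul_le_mul hxi hyi hm (abs_nonneg _)
  have hoff_term : ∀ z ∈ (S ×ˢ T).erase (i, i), |f z| ≤ M ^ 2 * ε := by
    intro z hz
    have hxz := hxM z.1 (mem_filter.1 (mem_product.1 (mem_of_mem_erase hz)).1).2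
    have hyz := hyM z.2 (mem_filter.1 (mem_product.1 (mem_of_mem_erase hz)).2).2
    calc |f z| = |x z.1| * |y z.2| * |G z.1 z.2| := by simp only [f, abs_mul]; ring
      _ ≤ M * M * ε :=
        mul_le_mul (mul_le_mul hxz hyz (abs_nonneg _) ((abs_nonneg _).trans hxz))
          (hG _ _ (ne_of_mem_erase_product hint hz)) (abs_nonneg _) (mul_self_nonneg M)
      _ = M ^ 2 * ε := by ring
  have hoff : |∑ z ∈ (S ×ˢ T).erase (i, i), f z| ≤ #S * #T * M ^ 2 * ε := by
    calc |∑ z ∈ (S ×ˢ T).erase (i, i), f z| ≤ ∑ z ∈ (S ×ˢ T).erase (i, i), |f z| :=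
          abs_sum_le_sum_abs _ _
      _ ≤ #((S ×ˢ T).erase (i, i)) • (M ^ 2 * ε) := sum_le_card_nsmul _ _ _ hoff_term
      _ ≤ #(S ×ˢ T) • (M ^ 2 * ε) :=
          nsmul_le_nsmul_left (by positivity) (card_le_card (erase_subset _ _))
      _ = #S * #T * M ^ 2 * ε := by rw [card_product, nsmul_eq_mul]; push_cast; ring
  rw [dotProduct_mulVec_eq_sum_support, ← add_sum_erase _ _ hii]
  linarith [abs_sub_abs_le_abs_add (f (i, i)) (∑ z ∈ (S ×ˢ T).erase (i, i), f z)]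

theorem stmt_5_general (d r s : ℕ) (μ₀ m M : ℝ) (hμ₀ : 0 < μ₀) (hm : 0 < m)
    (A : Matrix (Fin d) (Fin r) ℝ)
    (hnorm : ∀ j, ∑ i, (A i j) ^ 2 = 1)
    (hincoh : ∀ i j, i ≠ j → |∑ k, A k i * A k j| < μ₀ / Real.sqrt d)
    (xk xl : Fin r → ℝ)
    (hsk : (Finset.univ.filter fun j => xk j ≠ 0).card = s)
    (hsl : (Finset.univ.filter fun j => xl j ≠ 0).card = s)
    (hbk : ∀ j, xk j ≠ 0 → m ≤ |xk j| ∧ |xk j| ≤ M)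
    (hbl : ∀ j, xl j ≠ 0 → m ≤ |xl j| ∧ |xl j| ≤ M)
    (istar : Fin r)
    (hint : (Finset.univ.filter fun j => xk j ≠ 0) ∩
        (Finset.univ.filter fun j => xl j ≠ 0) = {istar})
    (yk yl : Fin d → ℝ) (hyk : yk = A.mulVec xk) (hyl : yl = A.mulVec xl) :
    m ^ 2 - (s : ℝ) ^ 2 * M ^ 2 * μ₀ / Real.sqrt d ≤ |∑ i, yk i * yl i| := by
  subst hyk hyl
  have hgram_diag : (Aᵀ * A) istar istar = 1 := by
    simpa only [mul_apply, transpose_apply, sq] using hnorm istar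
  have hgram_off : ∀ p q, p ≠ q → |(Aᵀ * A) p q| ≤ μ₀ / √d := fun p q hpq => by
    simpa only [mul_apply, transpose_apply] using (hincoh p q hpq).le
  obtain ⟨hxk, hxl⟩ : xk istar ≠ 0 ∧ xl istar ≠ 0 := by
    simpa only [mem_inter, mem_filter, mem_univ, true_and] using hint.ge (mem_singleton_self _)
  have h := sub_le_abs_dotProduct_mulVec_of_support_inter_eq_singleton hint hgram_diag hgram_off
    (by positivity) hm.le (hbk _ hxk).1 (hbl _ hxl).1 (fun j hj => (hbk j hj).2)
    (fun j hj => (hbl j hj).2)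
  rw [hsk, hsl, ← mulVec_dotProduct_mulVec] at h
  calc m ^ 2 - (s : ℝ) ^ 2 * M ^ 2 * μ₀ / √d = m ^ 2 - s * s * M ^ 2 * (μ₀ / √d) := by ring
    _ ≤ |A *ᵥ xk ⬝ᵥ A *ᵥ xl| := h

theorem stmt_5 (d r s : ℕ) (μ₀ m M : ℝ) (hμ₀ : 0 < μ₀) (hm : 0 < m) (hmM : m ≤ M)
    (A : Matrix (Fin d) (Fin r) ℝ)
    (hnorm : ∀ j, ∑ i, (A i j) ^ 2 = 1)
    (hincoh : ∀ i j, i ≠ j → |∑ k, A k i * A k j| < μ₀ / Real.sqrt d)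
    (xk xl : Fin r → ℝ)
    (hsk : (Finset.univ.filter fun j => xk j ≠ 0).card = s)
    (hsl : (Finset.univ.filter fun j => xl j ≠ 0).card = s)
    (hbk : ∀ j, xk j ≠ 0 → m ≤ |xk j| ∧ |xk j| ≤ M)
    (hbl : ∀ j, xl j ≠ 0 → m ≤ |xl j| ∧ |xl j| ≤ M)
    (istar : Fin r)
    (hint : (Finset.univ.filter fun j => xk j ≠ 0) ∩
        (Finset.univ.filter fun j => xl j ≠ 0) = {istar})
    (yk yl : Fin d → ℝ) (hyk : yk = A.mulVec xk) (hyl : yl = A.mulVec xl) :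
    m ^ 2 - (s : ℝ) ^ 2 * M ^ 2 * μ₀ / Real.sqrt d ≤ |∑ i, yk i * yl i| :=
  stmt_5_general d r s μ₀ m M hμ₀ hm A hnorm hincoh xk xl hsk hsl hbk hbl istar hint yk yl hyk hyl
end

section
/- Let S be a uniformly random s-element subset of [r] (the support of a sample), and fix two sets S₁, S₂ ⊆ [r] of size s each with S₁ ∩ S₂ = {a}. Then the conditional probability that S ∩ S₁ and S ∩ S₂ are both nonempty but it is NOT the case that S ∩ S₁ = S ∩ S₂ = {a}, is at most s³/r times the probability that a ∈ S. Equivalently: P[¬(S∩S₁ = S∩S₂ = {a}) and S∩S₁ ≠ ∅ and S∩S₂ ≠ ∅] ≤ (s³/r)·P[a ∈ S]. -/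
/-!
If `S` meets both `S₁` and `S₂` but not exactly in `{a}`, then it contains two distinct points
`x ∈ S₁`, `y ∈ S₂`: otherwise every point of `S ∩ S₁` equals every point of `S ∩ S₂`, forcing both
to be the same singleton inside `S₁ ∩ S₂ = {a}`. A union bound over the at most `s²` such pairs
reduces the claim to `P[x, y ∈ S] = P[x ∈ S] · (s - 1)/(r - 1) ≤ P[a ∈ S] · s/r`.
-/

open Finset

theorem Nat.add_two_mul_choose_le (n k : ℕ) :
    (n + 2) * n.choose k ≤ (k + 2) * (n + 1).choose (k + 1) := by
  rcases le_or_gt k n with hkn | hnk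
  · have hpascal : (n + 1) * n.choose k = (n + 1).choose (k + 1) * (k + 1) :=
      Nat.add_one_mul_choose_eq n k
    refine Nat.le_of_mul_le_mul_left ?_ n.succ_pos
    calc (n + 1) * ((n + 2) * n.choose k)
        = (n + 2) * (k + 1) * (n + 1).choose (k + 1) := by rw [mul_left_comm, hpascal]; ring
      _ ≤ (n + 1) * (k + 2) * (n + 1).choose (k + 1) := Nat.mul_le_mul_right _ (by nlinarith)
      _ = (n + 1) * ((k + 2) * (n + 1).choose (k + 1)) := by ring
  · simp [Nat.choose_eq_zero_of_lt hnk]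

namespace Finset

variable {α : Type*} [DecidableEq α]

theorem exists_mem_mem_ne_of_inter_subset_singleton {A B : Finset α} {a : α}
    (hAB : A ∩ B ⊆ {a}) (hA : A.Nonempty) (hB : B.Nonempty) (h : ¬(A = {a} ∧ B = {a})) :
    ∃ x ∈ A, ∃ y ∈ B, x ≠ y := by
  by_contra! hall
  obtain ⟨x₀, hx₀⟩ := hA
  obtain ⟨y₀, hy₀⟩ := hB
  have hy₀a : y₀ = a := mem_singleton.1 <| hAB <| mem_inter.2 ⟨hall x₀ hx₀ y₀ hy₀ ▸ hx₀, hy₀⟩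
  subst hy₀a
  have hx₀y₀ := hall x₀ hx₀ y₀ hy₀
  subst hx₀y₀
  exact h ⟨eq_singleton_iff_unique_mem.2 ⟨hx₀, fun x hx => hall x hx x₀ hy₀⟩,
    eq_singleton_iff_unique_mem.2 ⟨hy₀, fun y hy => (hall x₀ hx₀ y hy).symm⟩⟩

variable [Fintype α]

theorem card_filter_mem_powersetCard_univ (k : ℕ) (x : α) :
    #{S ∈ powersetCard (k + 1) univ | x ∈ S} = (Fintype.card α - 1).choose k := by
  simpa using card_filter_powersetCard_subset {x} univ (k + 1) (subset_univ _) (by simp)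

theorem card_filter_mem_powersetCard_univ_eq (s : ℕ) (x y : α) :
    #{S ∈ powersetCard s univ | x ∈ S} = #{S ∈ powersetCard s univ | y ∈ S} := by
  cases s with
  | zero => simp [filter_singleton]
  | succ k => rw [card_filter_mem_powersetCard_univ, card_filter_mem_powersetCard_univ]

theorem card_filter_pair_subset_powersetCard_univ (k : ℕ) {x y : α} (hxy : x ≠ y) :
    #{S ∈ powersetCard (k + 2) univ | {x, y} ⊆ S} = (Fintype.card α - 2).choose k := by
  simpa [card_pair hxy] using
    card_filter_powersetCard_subset {x, y} univ (k + 2) (subset_univ _) (by simp [card_pair hxy])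

theorem card_mul_card_filter_pair_subset_le (s : ℕ) {x y : α} (hxy : x ≠ y) :
    Fintype.card α * #{S ∈ powersetCard s univ | {x, y} ⊆ S} ≤
      s * #{S ∈ powersetCard s univ | x ∈ S} := by
  obtain ⟨n, hn⟩ : ∃ n, Fintype.card α = n + 2 :=
    Nat.exists_eq_add_of_le' ((card_pair hxy).symm.trans_le (card_le_univ _))
  rcases lt_or_ge s 2 with hs | hs
  · have hempty : {S ∈ powersetCard s (univ : Finset α) | {x, y} ⊆ S} = ∅ := by
      refine filter_false_of_mem fun S hS hxyS => ?_
      have := card_le_card hxyS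
      rw [card_pair hxy, (mem_powersetCard.1 hS).2] at this
      omega
    simp [hempty]
  · obtain ⟨k, rfl⟩ := Nat.exists_eq_add_of_le' hs
    rw [card_filter_pair_subset_powersetCard_univ k hxy, card_filter_mem_powersetCard_univ, hn]
    simpa using Nat.add_two_mul_choose_le n k

theorem card_mul_card_filter_meets_both_le {S₁ S₂ : Finset α} {a : α} (hint : S₁ ∩ S₂ = {a})
    (s : ℕ) :
    Fintype.card α * #{S ∈ powersetCard s univ |
        ¬(S ∩ S₁ = {a} ∧ S ∩ S₂ = {a}) ∧ (S ∩ S₁).Nonempty ∧ (S ∩ S₂).Nonempty} ≤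
      #S₁ * #S₂ * (s * #{S ∈ powersetCard s univ | a ∈ S}) := by
  set P := {p ∈ S₁ ×ˢ S₂ | p.1 ≠ p.2}
  have hcover : {S ∈ powersetCard s (univ : Finset α) |
        ¬(S ∩ S₁ = {a} ∧ S ∩ S₂ = {a}) ∧ (S ∩ S₁).Nonempty ∧ (S ∩ S₂).Nonempty} ⊆
      P.biUnion fun p => {S ∈ powersetCard s univ | {p.1, p.2} ⊆ S} := by
    intro S hS
    obtain ⟨hS, hne, h₁, h₂⟩ := mem_filter.1 hS
    have hsub : S ∩ S₁ ∩ (S ∩ S₂) ⊆ {a} :=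
      hint ▸ inter_subset_inter inter_subset_right inter_subset_right
    obtain ⟨x, hx, y, hy, hxy⟩ := exists_mem_mem_ne_of_inter_subset_singleton hsub h₁ h₂ hne
    rw [mem_inter] at hx hy
    exact mem_biUnion.2 ⟨(x, y), mem_filter.2 ⟨mem_product.2 ⟨hx.2, hy.2⟩, hxy⟩,
      mem_filter.2 ⟨hS, insert_subset hx.1 (singleton_subset_iff.2 hy.1)⟩⟩
  calc _ ≤ Fintype.card α * ∑ p ∈ P, #{S ∈ powersetCard s univ | {p.1, p.2} ⊆ S} :=
        Nat.mul_le_mul_left _ ((card_le_card hcover).trans card_biUnion_le)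
    _ = ∑ p ∈ P, Fintype.card α * #{S ∈ powersetCard s univ | {p.1, p.2} ⊆ S} := mul_sum _ _ _
    _ ≤ ∑ _p ∈ P, s * #{S ∈ powersetCard s univ | a ∈ S} := sum_le_sum fun p hp =>
        (card_mul_card_filter_pair_subset_le s (mem_filter.1 hp).2).trans_eq
          (by rw [card_filter_mem_powersetCard_univ_eq s p.1 a])
    _ = #P * (s * #{S ∈ powersetCard s univ | a ∈ S}) := by rw [sum_const, smul_eq_mul]
    _ ≤ #S₁ * #S₂ * (s * #{S ∈ powersetCard s univ | a ∈ S}) :=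
        Nat.mul_le_mul_right _ ((card_filter_le _ _).trans_eq (card_product _ _))

end Finset

theorem stmt_8_general (r s : ℕ)
    (S₁ S₂ : Finset (Fin r)) (a : Fin r)
    (h₁ : S₁.card = s) (h₂ : S₂.card = s) (hint : S₁ ∩ S₂ = {a}) :
    (((Finset.univ.powersetCard s).filter fun S : Finset (Fin r) =>
        ¬(S ∩ S₁ = {a} ∧ S ∩ S₂ = {a}) ∧ (S ∩ S₁).Nonempty ∧ (S ∩ S₂).Nonempty).card : ℝ) ≤
      ((s : ℝ) ^ 3 / r) *
        (((Finset.univ.powersetCard s).filter fun S : Finset (Fin r) => a ∈ S).card : ℝ) := by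
  have hr : (0 : ℝ) < r := by exact_mod_cast a.pos
  have hbound := card_mul_card_filter_meets_both_le hint s
  rw [Fintype.card_fin, h₁, h₂] at hbound
  rw [div_mul_eq_mul_div, le_div_iff₀ hr, mul_comm]
  calc (r : ℝ) * _ ≤ ((s * s * (s * _) : ℕ) : ℝ) := by exact_mod_cast hbound
    _ = _ := by push_cast; ring

theorem stmt_8 (r s : ℕ) (hs : 0 < s) (hsr : s ≤ r)
    (S₁ S₂ : Finset (Fin r)) (a : Fin r)
    (h₁ : S₁.card = s) (h₂ : S₂.card = s) (hint : S₁ ∩ S₂ = {a}) :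
    (((Finset.univ.powersetCard s).filter fun S : Finset (Fin r) =>
        ¬(S ∩ S₁ = {a} ∧ S ∩ S₂ = {a}) ∧ (S ∩ S₁).Nonempty ∧ (S ∩ S₂).Nonempty).card : ℝ) ≤
      ((s : ℝ) ^ 3 / r) *
        (((Finset.univ.powersetCard s).filter fun S : Finset (Fin r) => a ∈ S).card : ℝ) :=
  stmt_8_general r s S₁ S₂ a h₁ h₂ hint
end

section
/- Let S and S' be two independent uniformly random s-element subsets of [r], and fix two s-element subsets S₁, S₂ with S₁ ∩ S₂ = {a}. Assume s³ ≤ r/5 and s² ≤ r/40. Then conditioned on the event that S∩S₁ ≠ ∅, S∩S₂ ≠ ∅, S'∩S₁ ≠ ∅, S'∩S₂ ≠ ∅, the probability that S ∩ S' = S ∩ S₁ = S ∩ S₂ = S' ∩ S₁ = S' ∩ S₂ = {a} is at least 1 - 24s³/r. -/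
/-!
Write `n = |α|`, `c₁ = C(n-1, s-1)` for the number of `s`-sets through `a` and
`c₂ = C(n-2, s-2)` for the number through two given points, so that `n c₂ ≤ s c₁`.
Every pair of `s`-sets through `a` meets `S₁` and `S₂`, so there are at least `c₁²` such pairs.
A pair meeting `S₁` and `S₂` that is not anchored at `a` has one of its sets either missing `a`
(then it contains a point of `S₁ \ {a}` and a distinct point of `S₂ \ {a}`: at most `s² c₂`
sets), or containing `a` and another point of `S₁ ∪ S₂` (at most `2 s c₂` sets), or the two sets
share a point other than `a` (at most `n c₂²` pairs). Multiplying by `n` and using `n c₂ ≤ s c₁`,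
the bad pairs are at most a `7 s³ / n` fraction. (For `s ≤ 1` every set meeting both `S₁` and
`S₂` is `{a}`, and there are no bad pairs.)
-/

open Finset

theorem Nat.mul_choose_sub_two_le {n k : ℕ} (hn : 2 ≤ n) (hk : 2 ≤ k) :
    n * (n - 2).choose (k - 2) ≤ k * (n - 1).choose (k - 1) := by
  obtain ⟨n, rfl⟩ := Nat.exists_eq_add_of_le' hn
  obtain ⟨k, rfl⟩ := Nat.exists_eq_add_of_le' hk
  simp only [Nat.add_sub_cancel, Nat.add_succ_sub_one]
  have hpascal : n.choose k ≤ (n + 1).choose (k + 1) := by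
    rw [Nat.choose_succ_succ]; exact Nat.le_add_right _ _
  have := Nat.add_one_mul_choose_eq n k
  nlinarith

variable {α : Type*} [Fintype α] [DecidableEq α]

theorem card_filter_mem_powersetCard_univ {s : ℕ} (hs : 1 ≤ s) (x : α) :
    #{S ∈ univ.powersetCard s | x ∈ S} = (Fintype.card α - 1).choose (s - 1) := by
  simpa using card_filter_powersetCard_subset {x} univ s (subset_univ _) (by simpa using hs)

theorem card_filter_pair_mem_powersetCard_univ {s : ℕ} (hs : 2 ≤ s) {x y : α} (hxy : x ≠ y) :
    #{S ∈ univ.powersetCard s | x ∈ S ∧ y ∈ S} = (Fintype.card α - 2).choose (s - 2) := by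
  have hcard : #{x, y} = 2 := card_pair hxy
  have := card_filter_powersetCard_subset {x, y} univ s (subset_univ _) (hcard ▸ hs)
  simpa [hcard, insert_subset_iff] using this

theorem card_filter_exists_pair_mem_le {s : ℕ} (hs : 2 ≤ s) (Q : Finset (α × α))
    (hQ : ∀ q ∈ Q, q.1 ≠ q.2) :
    #{S ∈ univ.powersetCard s | ∃ q ∈ Q, q.1 ∈ S ∧ q.2 ∈ S} ≤
      #Q * (Fintype.card α - 2).choose (s - 2) := by
  calc _ ≤ #(Q.biUnion fun q => {S ∈ univ.powersetCard s | q.1 ∈ S ∧ q.2 ∈ S}) := by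
        refine card_le_card fun S hS => ?_
        simp only [mem_filter, mem_biUnion] at hS ⊢
        obtain ⟨hSs, q, hq, hqS⟩ := hS
        exact ⟨q, hq, hSs, hqS⟩
    _ ≤ _ := card_biUnion_le_card_mul _ _ _ fun q hq =>
        (card_filter_pair_mem_powersetCard_univ hs (hQ q hq)).le

theorem one_sub_mul_card_le_card_of_subset {β : Type*} [DecidableEq β] {G B : Finset β}
    (hBG : B ⊆ G) {c : ℝ} (h : (#(G \ B) : ℝ) ≤ c * #G) : (1 - c) * #G ≤ #B := by
  have : (#(G \ B) : ℝ) + #B = #G := by exact_mod_cast card_sdiff_add_card_eq_card hBG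
  linarith

namespace AnchorDetection

variable (s : ℕ) (S₁ S₂ : Finset α) (a : α)

def meetingBoth : Finset (Finset α) :=
  {S ∈ univ.powersetCard s | (S ∩ S₁).Nonempty ∧ (S ∩ S₂).Nonempty}

def through : Finset (Finset α) := {S ∈ univ.powersetCard s | a ∈ S}

def anchoredPairs : Finset (Finset α × Finset α) :=
  {p ∈ univ.powersetCard s ×ˢ univ.powersetCard s |
    p.1 ∩ p.2 = {a} ∧ p.1 ∩ S₁ = {a} ∧ p.1 ∩ S₂ = {a} ∧ p.2 ∩ S₁ = {a} ∧ p.2 ∩ S₂ = {a}}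

theorem meetingBoth_product :
    meetingBoth s S₁ S₂ ×ˢ meetingBoth s S₁ S₂ =
      {p ∈ (univ : Finset α).powersetCard s ×ˢ (univ : Finset α).powersetCard s |
        (p.1 ∩ S₁).Nonempty ∧ (p.1 ∩ S₂).Nonempty ∧
        (p.2 ∩ S₁).Nonempty ∧ (p.2 ∩ S₂).Nonempty} := by
  ext; simp only [meetingBoth, mem_product, mem_filter]; tauto

variable {s S₁ S₂ a}

theorem anchoredPairs_subset :
    anchoredPairs s S₁ S₂ a ⊆ meetingBoth s S₁ S₂ ×ˢ meetingBoth s S₁ S₂ := by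
  intro p hp
  simp only [anchoredPairs, meetingBoth, mem_filter, mem_product] at hp ⊢
  obtain ⟨⟨h₁, h₂⟩, -, e₁₁, e₁₂, e₂₁, e₂₂⟩ := hp
  simp [h₁, h₂, e₁₁, e₁₂, e₂₁, e₂₂]

theorem through_subset_meetingBoth (h₁ : a ∈ S₁) (h₂ : a ∈ S₂) :
    through s a ⊆ meetingBoth s S₁ S₂ := by
  intro S hS
  simp only [through, meetingBoth, mem_filter] at hS ⊢
  exact ⟨hS.1, ⟨a, mem_inter.2 ⟨hS.2, h₁⟩⟩, ⟨a, mem_inter.2 ⟨hS.2, h₂⟩⟩⟩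

theorem eq_singleton_of_mem_meetingBoth (hs : s ≤ 1) (hint : S₁ ∩ S₂ = {a}) {S : Finset α}
    (hS : S ∈ meetingBoth s S₁ S₂) : S = {a} := by
  simp only [meetingBoth, mem_filter, mem_powersetCard] at hS
  obtain ⟨⟨-, hcard⟩, ⟨x, hx⟩, ⟨y, hy⟩⟩ := hS
  rw [mem_inter] at hx hy
  have hone := card_le_one.1 (hcard.trans_le hs)
  obtain rfl := hone x hx.1 y hy.1
  have hxa : x = a := mem_singleton.1 (hint ▸ mem_inter.2 ⟨hx.2, hy.2⟩)
  exact eq_singleton_iff_unique_mem.2 ⟨hxa ▸ hx.1, fun z hz => (hone z hz x hx.1).trans hxa⟩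

theorem meetingBoth_product_subset_anchoredPairs (hs : s ≤ 1) (hint : S₁ ∩ S₂ = {a}) :
    meetingBoth s S₁ S₂ ×ˢ meetingBoth s S₁ S₂ ⊆ anchoredPairs s S₁ S₂ a := by
  rintro ⟨S, T⟩ hp
  have ha : a ∈ S₁ ∧ a ∈ S₂ := mem_inter.1 (hint ▸ mem_singleton_self a)
  rw [mem_product] at hp
  have hS := eq_singleton_of_mem_meetingBoth hs hint hp.1
  have hT := eq_singleton_of_mem_meetingBoth hs hint hp.2
  have hP : {a} ∈ univ.powersetCard s := by
    have := hp.1; rw [hS] at this; exact (mem_filter.1 this).1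
  subst hS hT
  simp [anchoredPairs, hP, ha]

theorem meetingBoth_product_sdiff_anchoredPairs_subset (hint : S₁ ∩ S₂ = {a}) :
    meetingBoth s S₁ S₂ ×ˢ meetingBoth s S₁ S₂ \ anchoredPairs s S₁ S₂ a ⊆
      ({S ∈ meetingBoth s S₁ S₂ | a ∉ S} ×ˢ meetingBoth s S₁ S₂ ∪
        meetingBoth s S₁ S₂ ×ˢ {S ∈ meetingBoth s S₁ S₂ | a ∉ S}) ∪
      ({S ∈ through s a | ∃ b ∈ (S₁ ∪ S₂).erase a, b ∈ S} ×ˢ through s a ∪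
        through s a ×ˢ {S ∈ through s a | ∃ b ∈ (S₁ ∪ S₂).erase a, b ∈ S}) ∪
      {p ∈ through s a ×ˢ through s a | ∃ b ≠ a, b ∈ p.1 ∧ b ∈ p.2} := by
  rintro ⟨S, T⟩ hp
  have ha : a ∈ S₁ ∧ a ∈ S₂ := mem_inter.1 (hint ▸ mem_singleton_self a)
  simp only [meetingBoth, through, anchoredPairs, mem_sdiff, mem_product, mem_filter, mem_union,
    mem_erase] at hp ⊢
  by_contra! h
  apply hp.2
  grind [eq_singleton_iff_unique_mem]

theorem card_filter_not_mem_meetingBoth_le (hs : 2 ≤ s) (hint : S₁ ∩ S₂ = {a}) :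
    #{S ∈ meetingBoth s S₁ S₂ | a ∉ S} ≤
      #S₁ * #S₂ * (Fintype.card α - 2).choose (s - 2) := by
  have hQ : ∀ q ∈ S₁.erase a ×ˢ S₂.erase a, q.1 ≠ q.2 := by
    rintro ⟨x, y⟩ hq (rfl : x = y)
    simp only [mem_product, mem_erase] at hq
    exact hq.1.1 (mem_singleton.1 (hint ▸ mem_inter.2 ⟨hq.1.2, hq.2.2⟩))
  calc _ ≤ #{S ∈ univ.powersetCard s | ∃ q ∈ S₁.erase a ×ˢ S₂.erase a, q.1 ∈ S ∧ q.2 ∈ S} := by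
        refine card_le_card fun S hS => ?_
        simp only [meetingBoth, mem_filter, mem_product, mem_erase, Prod.exists] at hS ⊢
        obtain ⟨⟨hSs, ⟨x, hx⟩, ⟨y, hy⟩⟩, haS⟩ := hS
        rw [mem_inter] at hx hy
        exact ⟨hSs, x, y, ⟨⟨fun h => haS (h ▸ hx.1), hx.2⟩, fun h => haS (h ▸ hy.1), hy.2⟩,
          hx.1, hy.1⟩
    _ ≤ #(S₁.erase a ×ˢ S₂.erase a) * (Fintype.card α - 2).choose (s - 2) :=
        card_filter_exists_pair_mem_le hs _ hQ
    _ ≤ _ := by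
        rw [card_product]
        exact Nat.mul_le_mul_right _ (Nat.mul_le_mul card_erase_le card_erase_le)

theorem card_filter_through_exists_mem_le (hs : 2 ≤ s) (W : Finset α) (ha : a ∉ W) :
    #{S ∈ through s a | ∃ b ∈ W, b ∈ S} ≤ #W * (Fintype.card α - 2).choose (s - 2) := by
  have hQ : ∀ q ∈ ({a} : Finset α) ×ˢ W, q.1 ≠ q.2 := by
    simp only [mem_product, mem_singleton, Prod.forall]
    rintro _ b ⟨rfl, hb⟩ rfl; exact ha hb
  have := card_filter_exists_pair_mem_le hs _ hQ
  rw [card_product, card_singleton, one_mul] at this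
  refine le_trans (card_le_card fun S hS => ?_) this
  simp only [through, mem_filter, mem_product, mem_singleton, Prod.exists] at hS ⊢
  obtain ⟨⟨hSs, haS⟩, b, hb, hbS⟩ := hS
  exact ⟨hSs, a, b, ⟨rfl, hb⟩, haS, hbS⟩

theorem card_filter_through_product_le (hs : 2 ≤ s) :
    #{p ∈ through s a ×ˢ through s a | ∃ b ≠ a, b ∈ p.1 ∧ b ∈ p.2} ≤
      Fintype.card α * (Fintype.card α - 2).choose (s - 2) ^ 2 := by
  set F : α → Finset (Finset α) := fun b => {S ∈ univ.powersetCard s | a ∈ S ∧ b ∈ S}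
  calc _ ≤ #((univ.erase a).biUnion fun b => F b ×ˢ F b) := by
        refine card_le_card fun p hp => ?_
        simp only [F, through, mem_filter, mem_product, mem_biUnion, mem_erase, mem_univ,
          and_true] at hp ⊢
        obtain ⟨⟨⟨h₁, ha₁⟩, h₂, ha₂⟩, b, hba, hb₁, hb₂⟩ := hp
        exact ⟨b, hba, ⟨h₁, ha₁, hb₁⟩, h₂, ha₂, hb₂⟩
    _ ≤ #(univ.erase a) * (Fintype.card α - 2).choose (s - 2) ^ 2 := by
        refine card_biUnion_le_card_mul _ _ _ fun b hb => ?_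
        rw [card_product, card_filter_pair_mem_powersetCard_univ hs (ne_of_mem_erase hb).symm, sq]
    _ ≤ _ := by
        gcongr; exact (card_erase_le).trans (card_univ).le

theorem card_mul_card_sdiff_anchoredPairs_le (hs : 2 ≤ s) (hn : 2 ≤ Fintype.card α)
    (h₁ : #S₁ ≤ s) (h₂ : #S₂ ≤ s) (hint : S₁ ∩ S₂ = {a}) :
    Fintype.card α * #(meetingBoth s S₁ S₂ ×ˢ meetingBoth s S₁ S₂ \ anchoredPairs s S₁ S₂ a) ≤
      7 * s ^ 3 * #(meetingBoth s S₁ S₂ ×ˢ meetingBoth s S₁ S₂) := by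
  have ha : a ∈ S₁ ∧ a ∈ S₂ := mem_inter.1 (hint ▸ mem_singleton_self a)
  set n := Fintype.card α
  set c₁ := (n - 1).choose (s - 1)
  set c₂ := (n - 2).choose (s - 2)
  set m := #(meetingBoth s S₁ S₂)
  have hA : #(through s a) = c₁ := card_filter_mem_powersetCard_univ (by omega) a
  have hAm : c₁ ≤ m := hA ▸ card_le_card (through_subset_meetingBoth ha.1 ha.2)
  have hc : n * c₂ ≤ s * c₁ := Nat.mul_choose_sub_two_le hn hs
  have hX : #{S ∈ meetingBoth s S₁ S₂ | a ∉ S} ≤ s ^ 2 * c₂ :=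
    (card_filter_not_mem_meetingBoth_le hs hint).trans (by rw [sq]; gcongr)
  have hE : #{S ∈ through s a | ∃ b ∈ (S₁ ∪ S₂).erase a, b ∈ S} ≤ 2 * s * c₂ := by
    refine (card_filter_through_exists_mem_le hs _ (notMem_erase a _)).trans ?_
    gcongr
    exact card_erase_le.trans ((card_union_le _ _).trans (by omega))
  have hD : #{p ∈ through s a ×ˢ through s a | ∃ b ≠ a, b ∈ p.1 ∧ b ∈ p.2} ≤ n * c₂ ^ 2 :=
    card_filter_through_product_le hs
  have hbad := card_le_card (meetingBoth_product_sdiff_anchoredPairs_subset (s := s) hint)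
  grw [card_union_le, card_union_le, card_union_le, card_union_le] at hbad
  simp only [card_product, hA] at hbad
  calc _ ≤ n * (2 * (s ^ 2 * c₂ * m) + 2 * (2 * s * c₂ * c₁) + n * c₂ ^ 2) := by
        gcongr
        nlinarith [Nat.mul_le_mul_right m hX, Nat.mul_le_mul_right c₁ hE]
    _ = 2 * s ^ 2 * (n * c₂) * m + 4 * s * (n * c₂) * c₁ + (n * c₂) ^ 2 := by ring
    _ ≤ 2 * s ^ 2 * (s * m) * m + 4 * s * (s * m) * m + (s * m) ^ 2 := by
        grw [hc, hAm]
    _ = (2 * s ^ 3 + 5 * s ^ 2) * m ^ 2 := by ring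
    _ ≤ 7 * s ^ 3 * #(meetingBoth s S₁ S₂ ×ˢ meetingBoth s S₁ S₂) := by
        rw [card_product, ← sq]
        gcongr
        have : s ^ 2 ≤ s ^ 3 := Nat.pow_le_pow_right (by omega) (by norm_num)
        omega

theorem one_sub_mul_card_meetingBoth_product_le (hsn : s ≤ Fintype.card α) (h₁ : #S₁ ≤ s)
    (h₂ : #S₂ ≤ s) (hint : S₁ ∩ S₂ = {a}) :
    (1 - 24 * (s : ℝ) ^ 3 / Fintype.card α) * #(meetingBoth s S₁ S₂ ×ˢ meetingBoth s S₁ S₂) ≤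
      #(anchoredPairs s S₁ S₂ a) := by
  refine one_sub_mul_card_le_card_of_subset anchoredPairs_subset ?_
  obtain hs | hs := le_or_gt s 1
  · rw [sdiff_eq_empty_iff_subset.2 (meetingBoth_product_subset_anchoredPairs hs hint)]
    simp only [card_empty, Nat.cast_zero]
    positivity
  · have hbad := card_mul_card_sdiff_anchoredPairs_le hs (hs.trans_le hsn) h₁ h₂ hint
    have hn : (0 : ℝ) < Fintype.card α := by
      exact_mod_cast zero_lt_two.trans_le (hs.trans_le hsn)
    have hbadR := (Nat.cast_le (α := ℝ)).2 hbad
    push_cast at hbadR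
    rw [div_mul_eq_mul_div, le_div_iff₀ hn, mul_comm]
    exact hbadR.trans (by gcongr; norm_num)

end AnchorDetection

theorem stmt_10_general (r s : ℕ)
    (h1 : 5 * s ^ 3 ≤ r)
    (S₁ S₂ : Finset (Fin r)) (a : Fin r)
    (hc₁ : S₁.card = s) (hc₂ : S₂.card = s) (hint : S₁ ∩ S₂ = {a}) :
    (1 - 24 * (s : ℝ) ^ 3 / r) *
        ((((Finset.univ.powersetCard s) ×ˢ (Finset.univ.powersetCard s)).filter
          fun p : Finset (Fin r) × Finset (Fin r) =>
            (p.1 ∩ S₁).Nonempty ∧ (p.1 ∩ S₂).Nonempty ∧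
            (p.2 ∩ S₁).Nonempty ∧ (p.2 ∩ S₂).Nonempty).card : ℝ) ≤
      ((((Finset.univ.powersetCard s) ×ˢ (Finset.univ.powersetCard s)).filter
          fun p : Finset (Fin r) × Finset (Fin r) =>
            p.1 ∩ p.2 = {a} ∧ p.1 ∩ S₁ = {a} ∧ p.1 ∩ S₂ = {a} ∧
            p.2 ∩ S₁ = {a} ∧ p.2 ∩ S₂ = {a}).card : ℝ) := by
  have hsr : s ≤ Fintype.card (Fin r) := by
    rw [Fintype.card_fin]; nlinarith [Nat.le_self_pow (by norm_num : 3 ≠ 0) s]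
  have := AnchorDetection.one_sub_mul_card_meetingBoth_product_le hsr hc₁.le hc₂.le hint
  rwa [Fintype.card_fin, AnchorDetection.meetingBoth_product] at this

theorem stmt_10 (r s : ℕ) (hs : 0 < s)
    (h1 : 5 * s ^ 3 ≤ r) (h2 : 40 * s ^ 2 ≤ r)
    (S₁ S₂ : Finset (Fin r)) (a : Fin r)
    (hc₁ : S₁.card = s) (hc₂ : S₂.card = s) (hint : S₁ ∩ S₂ = {a}) :
    (1 - 24 * (s : ℝ) ^ 3 / r) *
        ((((Finset.univ.powersetCard s) ×ˢ (Finset.univ.powersetCard s)).filter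
          fun p : Finset (Fin r) × Finset (Fin r) =>
            (p.1 ∩ S₁).Nonempty ∧ (p.1 ∩ S₂).Nonempty ∧
            (p.2 ∩ S₁).Nonempty ∧ (p.2 ∩ S₂).Nonempty).card : ℝ) ≤
      ((((Finset.univ.powersetCard s) ×ˢ (Finset.univ.powersetCard s)).filter
          fun p : Finset (Fin r) × Finset (Fin r) =>
            p.1 ∩ p.2 = {a} ∧ p.1 ∩ S₁ = {a} ∧ p.1 ∩ S₂ = {a} ∧
            p.2 ∩ S₁ = {a} ∧ p.2 ∩ S₂ = {a}).card : ℝ) :=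
  stmt_10_general r s h1 S₁ S₂ a hc₁ hc₂ hint
end

section
/- For positive integers s, r with s ≤ r/2 and s² ≤ r/40: C(r-2s+1, s-1)·C(r-3s+2, s-1) / C(r,s)² ≥ (s²/r²)·(1 - 20s²/r). -/
/-!
Write `s = k + 1`. Then `C(r, s) = C(r, k) (r - k) / s`, so it suffices to compare `C(r - d, k)` with
`C(r, k)` for `d = 2k + 1` and `d = 3k + 1`. Factor by factor, `r - d - i ≥ (1 - d / (r - k + 1)) (r - i)`
for `i < k`, and Bernoulli's inequality turns the resulting `k`-th power into
`C(r - d, k) ≥ (1 - k d / (r - k + 1)) C(r, k)`. The two losses add up to `k (5k + 2) / (r - k + 1)`,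
which is at most `20 s² / r` because `r ≥ 40 s²`.
-/

lemma pow_mul_descFactorial_le {c : ℝ} (hc : 0 ≤ c) {m n k : ℕ}
    (h : ∀ i < k, c * (n - i : ℕ) ≤ (m - i : ℕ)) :
    c ^ k * n.descFactorial k ≤ m.descFactorial k := by
  induction k with
  | zero => simp
  | succ k ih =>
    have hk := h k (by omega)
    calc c ^ (k + 1) * (n.descFactorial (k + 1) : ℝ)
        = (c * (n - k : ℕ)) * (c ^ k * n.descFactorial k) := by
          rw [Nat.descFactorial_succ]; push_cast; ring
      _ ≤ (m - k : ℕ) * m.descFactorial k :=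
          mul_le_mul hk (ih fun i hi => h i (by omega)) (by positivity) (by positivity)
      _ = m.descFactorial (k + 1) := by rw [Nat.descFactorial_succ]; push_cast; ring

lemma pow_mul_choose_le {c : ℝ} (hc : 0 ≤ c) {m n k : ℕ}
    (h : ∀ i < k, c * (n - i : ℕ) ≤ (m - i : ℕ)) :
    c ^ k * n.choose k ≤ m.choose k := by
  have hdesc := pow_mul_descFactorial_le hc h
  simp only [Nat.descFactorial_eq_factorial_mul_choose, Nat.cast_mul] at hdesc
  have hfac : (0 : ℝ) < k.factorial := by exact_mod_cast k.factorial_pos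
  nlinarith

lemma one_sub_mul_choose_le_choose_sub {n d k : ℕ} (h : d + k ≤ n) :
    (1 - k * d / (n - k + 1 : ℝ)) * n.choose k ≤ (n - d).choose k := by
  have hpos : (0 : ℝ) < n - k + 1 := by
    have : (k : ℝ) ≤ n := by exact_mod_cast (by omega : k ≤ n)
    linarith
  set t : ℝ := d / (n - k + 1) with ht
  have ht0 : 0 ≤ t := by positivity
  have ht1 : t ≤ 1 := by
    rw [ht, div_le_one hpos]
    have : ((d + k : ℕ) : ℝ) ≤ n := by exact_mod_cast h
    push_cast at this; linarith
  have hfactor : ∀ i < k, (1 - t) * (n - i : ℕ) ≤ (n - d - i : ℕ) := by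
    intro i hi
    have hi' : ((i + 1 : ℕ) : ℝ) ≤ k := by exact_mod_cast hi
    rw [Nat.sub_sub]
    push_cast [Nat.cast_sub (by omega : i ≤ n), Nat.cast_sub (by omega : d + i ≤ n)] at hi' ⊢
    have : d ≤ t * (n - i) := by
      rw [ht, div_mul_eq_mul_div, le_div_iff₀ hpos]
      nlinarith [(Nat.cast_nonneg d : (0 : ℝ) ≤ d)]
    linarith
  have hbern : 1 - k * d / (n - k + 1 : ℝ) ≤ (1 - t) ^ k := by
    calc 1 - k * d / (n - k + 1 : ℝ) = 1 + k * -t := by rw [ht]; ring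
      _ ≤ (1 + -t) ^ k := one_add_mul_le_pow (by linarith) k
      _ = (1 - t) ^ k := by ring
  calc (1 - k * d / (n - k + 1 : ℝ)) * n.choose k ≤ (1 - t) ^ k * n.choose k :=
        mul_le_mul_of_nonneg_right hbern (by positivity)
    _ ≤ (n - d).choose k := pow_mul_choose_le (by linarith) hfactor

lemma one_sub_mul_sq_choose_le_choose_sub_mul_choose_sub {n d₁ d₂ k : ℕ}
    (h₁ : d₁ + k ≤ n) (h₂ : d₂ + k ≤ n) :
    (1 - k * (d₁ + d₂) / (n - k + 1 : ℝ)) * n.choose k ^ 2 ≤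
      (n - d₁).choose k * (n - d₂).choose k := by
  have hpos : (0 : ℝ) < n - k + 1 := by
    have : (k : ℝ) ≤ n := by exact_mod_cast (by omega : k ≤ n)
    linarith
  set x : ℝ := k * d₁ / (n - k + 1)
  set y : ℝ := k * d₂ / (n - k + 1)
  have hx : 0 ≤ x := by positivity
  have hy : 0 ≤ y := by positivity
  have hsplit : k * (d₁ + d₂) / (n - k + 1 : ℝ) = x + y := by ring
  have hA := one_sub_mul_choose_le_choose_sub h₁
  have hB := one_sub_mul_choose_le_choose_sub h₂
  rcases le_or_gt 1 (x + y) with hxy | hxy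
  · rw [hsplit]
    exact le_trans (mul_nonpos_of_nonpos_of_nonneg (by linarith) (by positivity)) (by positivity)
  calc (1 - k * (d₁ + d₂) / (n - k + 1 : ℝ)) * n.choose k ^ 2
      ≤ ((1 - x) * n.choose k) * ((1 - y) * n.choose k) := by
        rw [hsplit]; nlinarith [mul_nonneg hx hy, sq_nonneg (n.choose k : ℝ)]
    _ ≤ (n - d₁).choose k * (n - d₂).choose k :=
        mul_le_mul hA hB (by nlinarith) (by positivity)

theorem stmt_11_general (s r : ℕ) (hs : 0 < s) (h40 : 40 * s ^ 2 ≤ r) :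
    ((r - 2 * s + 1).choose (s - 1) : ℝ) * ((r - 3 * s + 2).choose (s - 1) : ℝ) /
        ((r.choose s : ℝ)) ^ 2 ≥
      ((s : ℝ) ^ 2 / (r : ℝ) ^ 2) * (1 - 20 * (s : ℝ) ^ 2 / r) := by
  obtain ⟨k, rfl⟩ : ∃ k, s = k + 1 := ⟨s - 1, by omega⟩
  have h4k : 4 * (k + 1) ≤ r := by nlinarith
  rw [Nat.add_sub_cancel, show r - 2 * (k + 1) + 1 = r - (2 * k + 1) by omega,
    show r - 3 * (k + 1) + 2 = r - (3 * k + 1) by omega]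
  have hprod := one_sub_mul_sq_choose_le_choose_sub_mul_choose_sub
    (n := r) (d₁ := 2 * k + 1) (d₂ := 3 * k + 1) (k := k) (by omega) (by omega)
  have hkr : (k : ℝ) + 1 ≤ r := by exact_mod_cast (by omega : k + 1 ≤ r)
  have hrR : 40 * ((k : ℝ) + 1) ^ 2 ≤ r := by exact_mod_cast h40
  have hchoose : (r.choose (k + 1) : ℝ) = r.choose k * (r - k) / (k + 1) := by
    rw [eq_div_iff (by positivity)]
    have h := congrArg (Nat.cast (R := ℝ)) (Nat.choose_succ_right_eq r k)
    push_cast [Nat.cast_sub (by omega : k ≤ r)] at h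
    exact h
  have hloss : k * ((2 * k + 1 : ℕ) + (3 * k + 1 : ℕ)) / (r - k + 1 : ℝ) ≤
      20 * ((k : ℝ) + 1) ^ 2 / r := by
    rw [div_le_div_iff₀ (by linarith) (by linarith)]
    push_cast
    nlinarith
  have hc : (0 : ℝ) < r.choose k := by exact_mod_cast Nat.choose_pos (by omega)
  have hrk : (0 : ℝ) < r - k := by linarith
  rw [hchoose, ge_iff_le]
  push_cast at hprod hloss ⊢
  set c : ℝ := (r.choose k : ℝ)
  calc ((k : ℝ) + 1) ^ 2 / r ^ 2 * (1 - 20 * ((k : ℝ) + 1) ^ 2 / r)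
      ≤ ((k : ℝ) + 1) ^ 2 / (r - k) ^ 2 * (1 - k * (2 * k + 1 + (3 * k + 1)) / (r - k + 1)) := by
        gcongr
        · rw [sub_nonneg, div_le_one (by linarith)]; nlinarith
        · linarith
    _ = (1 - k * (2 * k + 1 + (3 * k + 1)) / (r - k + 1)) * c ^ 2 / (c * (r - k) / (k + 1)) ^ 2 := by
        field_simp
    _ ≤ _ := div_le_div_of_nonneg_right hprod (by positivity)

theorem stmt_11 (s r : ℕ) (hs : 0 < s) (h2s : 2 * s ≤ r) (h40 : 40 * s ^ 2 ≤ r) :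
    ((r - 2 * s + 1).choose (s - 1) : ℝ) * ((r - 3 * s + 2).choose (s - 1) : ℝ) /
        ((r.choose s : ℝ)) ^ 2 ≥
      ((s : ℝ) ^ 2 / (r : ℝ) ^ 2) * (1 - 20 * (s : ℝ) ^ 2 / r) :=
  stmt_11_general s r hs h40
end
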